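/- In the Euclidean bilevel setting below, the map v* : ℝ^m → ℝ^n, v*(x) := (∇²_{yy} g(x, y*(x)))⁻¹ ∇_y f(x, y*(x)), is Lipschitz with constant √(1+κ²) ( ℓ_{f,0} ℓ_{g,2}/μ² + ℓ_{f,1}/μ ): for all x, x', ‖v*(x) − v*(x')‖ ≤ √(1+κ²) ( ℓ_{f,0} ℓ_{g,2}/μ² + ℓ_{f,1}/μ ) ‖x − x'‖. -/

import Mathlib

/-- Partial gradient in the first (x) variable of a function on a product of
Euclidean spaces. -/
noncomputable def gradx {m n : ℕ}
    (f : EuclideanSpace ℝ (Fin m) × EuclideanSpace ℝ (Fin n) → ℝ)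
    (p : EuclideanSpace ℝ (Fin m) × EuclideanSpace ℝ (Fin n)) :
    EuclideanSpace ℝ (Fin m) :=
  gradient (fun x => f (x, p.2)) p.1

/-- Partial gradient in the second (y) variable. -/
noncomputable def grady {m n : ℕ}
    (f : EuclideanSpace ℝ (Fin m) × EuclideanSpace ℝ (Fin n) → ℝ)
    (p : EuclideanSpace ℝ (Fin m) × EuclideanSpace ℝ (Fin n)) :
    EuclideanSpace ℝ (Fin n) :=
  gradient (fun y => f (p.1, y)) p.2

/-- Cross second derivative ∇²_{xy} f(x,y) : ℝ^m →L ℝ^n, the derivative in x of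
the map x ↦ ∇_y f(x,y). -/
noncomputable def crossxy {m n : ℕ}
    (f : EuclideanSpace ℝ (Fin m) × EuclideanSpace ℝ (Fin n) → ℝ)
    (p : EuclideanSpace ℝ (Fin m) × EuclideanSpace ℝ (Fin n)) :
    EuclideanSpace ℝ (Fin m) →L[ℝ] EuclideanSpace ℝ (Fin n) :=
  fderiv ℝ (fun x => grady f (x, p.2)) p.1

/-- Hessian in y: ∇²_{yy} f(x,y) : ℝ^n →L ℝ^n, the derivative in y of the map
y ↦ ∇_y f(x,y). -/
noncomputable def hessyy {m n : ℕ}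
    (f : EuclideanSpace ℝ (Fin m) × EuclideanSpace ℝ (Fin n) → ℝ)
    (p : EuclideanSpace ℝ (Fin m) × EuclideanSpace ℝ (Fin n)) :
    EuclideanSpace ℝ (Fin n) →L[ℝ] EuclideanSpace ℝ (Fin n) :=
  fderiv ℝ (fun y => grady f (p.1, y)) p.2

/-! With `A`, `B` the Hessians `∇²_{yy} g` and `u`, `u'` the gradients `∇_y f` at `(x, y*(x))` and
`(x', y*(x'))`, one has `A⁻¹u - B⁻¹u' = A⁻¹(u - u') - A⁻¹(A - B)B⁻¹u'`. Strong convexity makes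
both Hessians `μ`-coercive, so their inverses have norm at most `1/μ`; moreover `‖u'‖ ≤ ℓ_{f,0}`,
`‖u - u'‖ ≤ ℓ_{f,1} d` and `‖A - B‖ ≤ ℓ_{g,2} d`, where `d` is the distance between the two points
of `ℝ^m × ℝ^n`. Finally `d ≤ √(1+κ²) ‖x - x'‖` because `y*` is `κ`-Lipschitz: `∇_y g(x, ·)` is
`μ`-strongly monotone and vanishes at `y*(x)`. -/

open Set InnerProductSpace RealInnerProductSpace

theorem ConvexOn.apply_sub_le_of_hasFDerivAt {E : Type*} [NormedAddCommGroup E]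
    [NormedSpace ℝ E] {f : E → ℝ} {L : E →L[ℝ] ℝ} {x : E} (hf : ConvexOn ℝ univ f)
    (hL : HasFDerivAt f L x) (y : E) : L (y - x) ≤ f y - f x := by
  have hline := hL.comp_hasDerivAt_of_eq 0 (AffineMap.hasDerivAt_lineMap (a := x) (b := y))
    (by simp)
  simpa [slope_def_field] using (hf.comp_affineMap (AffineMap.lineMap x y)).le_slope_of_hasDerivAt
    (mem_univ 0) (mem_univ 1) zero_lt_one hline

theorem le_sqrt_sq_add_sq (a b : ℝ) : b ≤ √(a ^ 2 + b ^ 2) :=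
  (le_abs_self b).trans (Real.abs_le_sqrt (le_add_of_nonneg_left (sq_nonneg a)))

theorem sqrt_sq_add_sq_le {a b k : ℝ} (ha : 0 ≤ a) (hb : 0 ≤ b) (hba : b ≤ k * a) :
    √(a ^ 2 + b ^ 2) ≤ √(1 + k ^ 2) * a := by
  rw [← Real.sqrt_sq ha, ← Real.sqrt_mul (by positivity), Real.sqrt_sq ha]
  exact Real.sqrt_le_sqrt (by nlinarith)

section InnerProductSpace

variable {E : Type*} [NormedAddCommGroup E] [InnerProductSpace ℝ E]

def StronglyMonotone (μ : ℝ) (φ : E → E) : Prop :=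
  ∀ y₁ y₂, μ * ‖y₁ - y₂‖ ^ 2 ≤ ⟪φ y₁ - φ y₂, y₁ - y₂⟫

theorem StronglyMonotone.mul_norm_sub_le {μ : ℝ} {φ : E → E} (hφ : StronglyMonotone μ φ)
    (y₁ y₂ : E) : μ * ‖y₁ - y₂‖ ≤ ‖φ y₁ - φ y₂‖ := by
  rcases (norm_nonneg (y₁ - y₂)).eq_or_lt with h | h
  · rw [← h, mul_zero]
    exact norm_nonneg _
  · refine le_of_mul_le_mul_right ?_ h
    calc μ * ‖y₁ - y₂‖ * ‖y₁ - y₂‖ = μ * ‖y₁ - y₂‖ ^ 2 := by ring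
      _ ≤ ⟪φ y₁ - φ y₂, y₁ - y₂⟫ := hφ y₁ y₂
      _ ≤ ‖φ y₁ - φ y₂‖ * ‖y₁ - y₂‖ := real_inner_le_norm _ _

theorem StronglyMonotone.mul_norm_sq_le_inner_of_hasFDerivAt {μ : ℝ} {φ : E → E}
    {H : E →L[ℝ] E} {y : E} (hφ : StronglyMonotone μ φ) (hH : HasFDerivAt φ H y) (v : E) :
    μ * ‖v‖ ^ 2 ≤ ⟪H v, v⟫ := by
  have hline : HasDerivAt (fun t : ℝ => y + t • v) v 0 := by
    simpa using ((hasDerivAt_id (0 : ℝ)).smul_const v).const_add y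
  have hψ : HasDerivAt (fun t : ℝ => ⟪φ (y + t • v), v⟫) ⟪H v, v⟫ 0 := by
    simpa using (hH.comp_hasDerivAt_of_eq 0 hline (by simp)).inner ℝ (hasDerivAt_const 0 v)
  refine ge_of_tendsto ((hasDerivAt_iff_tendsto_slope.mp hψ).mono_left
    (nhdsWithin_mono (0 : ℝ) (show Ioi (0 : ℝ) ⊆ {0}ᶜ from fun _ ht => ne_of_gt ht))) ?_
  filter_upwards [self_mem_nhdsWithin] with t (ht : 0 < t)
  have hmono := hφ (y + t • v) y
  rw [add_sub_cancel_left, inner_sub_left, real_inner_smul_right, real_inner_smul_right,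
    norm_smul, Real.norm_of_nonneg ht.le] at hmono
  rw [slope_def_field, zero_smul, add_zero, sub_zero, le_div_iff₀ ht]
  nlinarith

variable [CompleteSpace E]

theorem StrongConvexOn.stronglyMonotone_gradient {μ : ℝ} {f : E → ℝ}
    (hf : StrongConvexOn univ μ f) (hd : Differentiable ℝ f) :
    StronglyMonotone μ (gradient f) := by
  have key : ∀ y z, ⟪gradient f y - μ • y, z - y⟫
      ≤ (f z - μ / 2 * ‖z‖ ^ 2) - (f y - μ / 2 * ‖y‖ ^ 2) := fun y z => by
    have hq := (hd y).hasFDerivAt.sub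
      ((hasStrictFDerivAt_norm_sq y).hasFDerivAt.const_mul (μ / 2))
    convert (strongConvexOn_iff_convex.mp hf).apply_sub_le_of_hasFDerivAt hq z using 1
    simp [inner_sub_left, inner_gradient_left, real_inner_smul_left]
    ring
  intro y₁ y₂
  have h₁ := key y₁ y₂
  have h₂ := key y₂ y₁
  have e : ⟪gradient f y₁ - μ • y₁, y₂ - y₁⟫ + ⟪gradient f y₂ - μ • y₂, y₁ - y₂⟫
      = μ * ‖y₁ - y₂‖ ^ 2 - ⟪gradient f y₁ - gradient f y₂, y₁ - y₂⟫ := by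
    rw [← neg_sub y₁ y₂, inner_neg_right, ← sub_eq_neg_add, ← inner_sub_left,
      show gradient f y₂ - μ • y₂ - (gradient f y₁ - μ • y₁)
        = μ • (y₁ - y₂) - (gradient f y₁ - gradient f y₂) by module,
      inner_sub_left, real_inner_smul_left, real_inner_self_eq_norm_sq]
  linarith

theorem ContDiff.gradient {n : WithTop ℕ∞} {f : E → ℝ} (hf : ContDiff ℝ (n + 1) f) :
    ContDiff ℝ n (gradient f) := by
  have : _root_.gradient f = (toDual ℝ E).symm ∘ fderiv ℝ f := by
    rw [← toDual_comp_gradient, ← Function.comp_assoc, LinearIsometryEquiv.symm_comp_self,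
      Function.id_comp]
  rw [this]
  exact (toDual ℝ E).symm.contDiff.comp (hf.fderiv_right le_rfl)

section Coercive

variable {μ : ℝ} {H : E →L[ℝ] E}

theorem exists_continuousLinearEquiv_eq_of_coercive (hμ : 0 < μ)
    (hH : ∀ v, μ * ‖v‖ ^ 2 ≤ ⟪H v, v⟫) : ∃ e : E ≃L[ℝ] E, (e : E →L[ℝ] E) = H := by
  have hB : IsCoercive ((innerSL ℝ (E := E)).comp H) :=
    ⟨μ, hμ, fun v => by simpa [sq, mul_assoc] using hH v⟩
  refine ⟨hB.continuousLinearEquivOfBilin, ?_⟩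
  ext1 v
  exact ext_inner_right ℝ fun w => by simp [hB.continuousLinearEquivOfBilin_apply]

theorem apply_inverse_apply_of_coercive (hμ : 0 < μ) (hH : ∀ v, μ * ‖v‖ ^ 2 ≤ ⟪H v, v⟫)
    (u : E) : H (H.inverse u) = u := by
  obtain ⟨e, rfl⟩ := exists_continuousLinearEquiv_eq_of_coercive hμ hH
  simp [ContinuousLinearMap.inverse_equiv]

theorem inverse_apply_apply_of_coercive (hμ : 0 < μ) (hH : ∀ v, μ * ‖v‖ ^ 2 ≤ ⟪H v, v⟫)
    (w : E) : H.inverse (H w) = w := by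
  obtain ⟨e, rfl⟩ := exists_continuousLinearEquiv_eq_of_coercive hμ hH
  simp [ContinuousLinearMap.inverse_equiv]

theorem norm_inverse_apply_le_of_coercive (hμ : 0 < μ) (hH : ∀ v, μ * ‖v‖ ^ 2 ≤ ⟪H v, v⟫)
    (u : E) : ‖H.inverse u‖ ≤ μ⁻¹ * ‖u‖ := by
  have hmono : StronglyMonotone μ H := fun v w => by simpa only [map_sub] using hH (v - w)
  have := hmono.mul_norm_sub_le (H.inverse u) 0
  rw [sub_zero, map_zero, sub_zero, apply_inverse_apply_of_coercive hμ hH] at this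
  rwa [inv_mul_eq_div, le_div_iff₀ hμ, mul_comm]

theorem norm_inverse_apply_sub_inverse_apply_le {A B : E →L[ℝ] E} (hμ : 0 < μ)
    (hA : ∀ v, μ * ‖v‖ ^ 2 ≤ ⟪A v, v⟫) (hB : ∀ v, μ * ‖v‖ ^ 2 ≤ ⟪B v, v⟫) (u u' : E) :
    ‖A.inverse u - B.inverse u'‖ ≤ μ⁻¹ * ‖u - u'‖ + μ⁻¹ * ‖A - B‖ * (μ⁻¹ * ‖u'‖) := by
  have hsplit : A.inverse u - B.inverse u'
      = A.inverse (u - u') - A.inverse ((A - B) (B.inverse u')) := by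
    rw [sub_apply, apply_inverse_apply_of_coercive hμ hB, map_sub, map_sub,
      inverse_apply_apply_of_coercive hμ hA]
    abel
  have hB' := norm_inverse_apply_le_of_coercive hμ hB u'
  calc ‖A.inverse u - B.inverse u'‖
      ≤ ‖A.inverse (u - u')‖ + ‖A.inverse ((A - B) (B.inverse u'))‖ :=
        hsplit ▸ norm_sub_le _ _
    _ ≤ μ⁻¹ * ‖u - u'‖ + μ⁻¹ * (‖A - B‖ * ‖B.inverse u'‖) := by
        gcongr
        · exact norm_inverse_apply_le_of_coercive hμ hA _
        · exact (norm_inverse_apply_le_of_coercive hμ hA _).trans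
            (by gcongr; exact (A - B).le_opNorm _)
    _ ≤ μ⁻¹ * ‖u - u'‖ + μ⁻¹ * ‖A - B‖ * (μ⁻¹ * ‖u'‖) := by
        rw [mul_assoc]
        gcongr

end Coercive

end InnerProductSpace

section Bilevel

variable {m n : ℕ} {g : EuclideanSpace ℝ (Fin m) × EuclideanSpace ℝ (Fin n) → ℝ}

theorem hasFDerivAt_grady (hg : ContDiff ℝ 2 g) (a : EuclideanSpace ℝ (Fin m))
    (b : EuclideanSpace ℝ (Fin n)) :
    HasFDerivAt (fun y => grady g (a, y)) (hessyy g (a, b)) b := by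
  have hgrad : ContDiff ℝ 1 (gradient fun y => g (a, y)) :=
    ContDiff.gradient (n := 1) (hg.comp (contDiff_const.prodMk contDiff_id))
  exact (hgrad.differentiable one_ne_zero b).hasFDerivAt

theorem stronglyMonotone_grady {μ : ℝ} (hg : ContDiff ℝ 2 g) {a : EuclideanSpace ℝ (Fin m)}
    (hsc : ConvexOn ℝ univ fun y => g (a, y) - μ / 2 * ‖y‖ ^ 2) :
    StronglyMonotone μ fun y => grady g (a, y) :=
  (strongConvexOn_iff_convex.mpr hsc).stronglyMonotone_gradient
    ((hg.differentiable two_ne_zero).comp (by fun_prop))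

theorem grady_eq_zero_of_forall_le {a : EuclideanSpace ℝ (Fin m)}
    {b : EuclideanSpace ℝ (Fin n)} (h : ∀ y, g (a, b) ≤ g (a, y)) : grady g (a, b) = 0 := by
  have hmin : IsLocalMin (fun y => g (a, y)) b := Filter.Eventually.of_forall h
  simp [grady, gradient, hmin.fderiv_eq_zero]

theorem norm_grady_le {ℓ : ℝ} (hℓ : 0 ≤ ℓ)
    (hlip : ∀ p q : EuclideanSpace ℝ (Fin m) × EuclideanSpace ℝ (Fin n),
      |g p - g q| ≤ ℓ * √(‖p.1 - q.1‖ ^ 2 + ‖p.2 - q.2‖ ^ 2))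
    (p : EuclideanSpace ℝ (Fin m) × EuclideanSpace ℝ (Fin n)) : ‖grady g p‖ ≤ ℓ := by
  rw [grady, gradient, LinearIsometryEquiv.norm_map]
  refine norm_fderiv_le_of_lip' ℝ hℓ (Filter.Eventually.of_forall fun y => ?_)
  simpa using hlip (p.1, y) p

theorem mul_norm_sub_le_of_grady_eq_zero {μ ℓ : ℝ}
    {ystar : EuclideanSpace ℝ (Fin m) → EuclideanSpace ℝ (Fin n)}
    (hmono : ∀ a, StronglyMonotone μ fun y => grady g (a, y))
    (hzero : ∀ a, grady g (a, ystar a) = 0)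
    (hlip : ∀ p q : EuclideanSpace ℝ (Fin m) × EuclideanSpace ℝ (Fin n),
      √(‖gradx g p - gradx g q‖ ^ 2 + ‖grady g p - grady g q‖ ^ 2)
        ≤ ℓ * √(‖p.1 - q.1‖ ^ 2 + ‖p.2 - q.2‖ ^ 2))
    (a a' : EuclideanSpace ℝ (Fin m)) : μ * ‖ystar a - ystar a'‖ ≤ ℓ * ‖a - a'‖ := by
  set q := (a', ystar a')
  calc μ * ‖ystar a - ystar a'‖ ≤ ‖grady g (a, ystar a) - grady g (a, ystar a')‖ :=
        (hmono a).mul_norm_sub_le _ _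
    _ = ‖grady g (a, ystar a') - grady g q‖ := by
        rw [hzero, hzero, zero_sub, norm_neg, sub_zero]
    _ ≤ √(‖gradx g (a, ystar a') - gradx g q‖ ^ 2 + ‖grady g (a, ystar a') - grady g q‖ ^ 2) :=
        le_sqrt_sq_add_sq _ _
    _ ≤ ℓ * ‖a - a'‖ := by simpa [q] using hlip (a, ystar a') q

end Bilevel

theorem statement_6_general {m n : ℕ}
    (f g : EuclideanSpace ℝ (Fin m) × EuclideanSpace ℝ (Fin n) → ℝ)
    (μ ℓf0 ℓf1 ℓg1 ℓg2 : ℝ)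
    (hμ : 0 < μ) (hℓf0 : 0 < ℓf0) (hℓf1 : 0 < ℓf1) (hℓg2 : 0 < ℓg2)
    (hg : ContDiff ℝ 2 g)
    (ystar : EuclideanSpace ℝ (Fin m) → EuclideanSpace ℝ (Fin n))
    -- μ-strong convexity of y ↦ g(x,y)
    (hsc : ∀ x, ConvexOn ℝ Set.univ (fun y => g (x, y) - μ / 2 * ‖y‖ ^ 2))
    -- y*(x) is the unique minimizer of y ↦ g(x,y)
    (hmin : ∀ x y, g (x, ystar x) ≤ g (x, y))
    -- f is ℓ_{f,0}-Lipschitz in the joint variable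
    (hflip : ∀ p q : EuclideanSpace ℝ (Fin m) × EuclideanSpace ℝ (Fin n),
      |f p - f q| ≤ ℓf0 * Real.sqrt (‖p.1 - q.1‖ ^ 2 + ‖p.2 - q.2‖ ^ 2))
    -- ∇f is ℓ_{f,1}-Lipschitz in the joint variable
    (hgradflip : ∀ p q : EuclideanSpace ℝ (Fin m) × EuclideanSpace ℝ (Fin n),
      Real.sqrt (‖gradx f p - gradx f q‖ ^ 2 + ‖grady f p - grady f q‖ ^ 2)
        ≤ ℓf1 * Real.sqrt (‖p.1 - q.1‖ ^ 2 + ‖p.2 - q.2‖ ^ 2))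
    -- ∇g is ℓ_{g,1}-Lipschitz in the joint variable
    (hglip : ∀ p q : EuclideanSpace ℝ (Fin m) × EuclideanSpace ℝ (Fin n),
      Real.sqrt (‖gradx g p - gradx g q‖ ^ 2 + ‖grady g p - grady g q‖ ^ 2)
        ≤ ℓg1 * Real.sqrt (‖p.1 - q.1‖ ^ 2 + ‖p.2 - q.2‖ ^ 2))
    -- ∇²_{xy} g and ∇²_{yy} g are ℓ_{g,2}-Lipschitz in operator norm
    (hhesslip : ∀ p q : EuclideanSpace ℝ (Fin m) × EuclideanSpace ℝ (Fin n),
      ‖hessyy g p - hessyy g q‖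
        ≤ ℓg2 * Real.sqrt (‖p.1 - q.1‖ ^ 2 + ‖p.2 - q.2‖ ^ 2))
    (vstar : EuclideanSpace ℝ (Fin m) → EuclideanSpace ℝ (Fin n))
    (hvstar : ∀ x, vstar x = (hessyy g (x, ystar x)).inverse (grady f (x, ystar x))) :
    ∀ x x', ‖vstar x - vstar x'‖ ≤
      Real.sqrt (1 + (ℓg1 / μ) ^ 2) * (ℓf0 * ℓg2 / μ ^ 2 + ℓf1 / μ) * ‖x - x'‖ := by
  intro x x'
  have hcoer : ∀ a v, μ * ‖v‖ ^ 2 ≤ ⟪hessyy g (a, ystar a) v, v⟫ := fun a =>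
    (stronglyMonotone_grady hg (hsc a)).mul_norm_sq_le_inner_of_hasFDerivAt
      (hasFDerivAt_grady hg a _)
  have hy : ‖ystar x - ystar x'‖ ≤ ℓg1 / μ * ‖x - x'‖ := by
    rw [div_mul_eq_mul_div, le_div_iff₀ hμ, mul_comm]
    exact mul_norm_sub_le_of_grady_eq_zero (fun a => stronglyMonotone_grady hg (hsc a))
      (fun a => grady_eq_zero_of_forall_le (hmin a)) hglip x x'
  set d := √(‖x - x'‖ ^ 2 + ‖ystar x - ystar x'‖ ^ 2)
  rw [hvstar, hvstar]
  calc _ ≤ μ⁻¹ * ‖grady f (x, ystar x) - grady f (x', ystar x')‖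
        + μ⁻¹ * ‖hessyy g (x, ystar x) - hessyy g (x', ystar x')‖
          * (μ⁻¹ * ‖grady f (x', ystar x')‖) :=
        norm_inverse_apply_sub_inverse_apply_le hμ (hcoer x) (hcoer x') _ _
    _ ≤ μ⁻¹ * (ℓf1 * d) + μ⁻¹ * (ℓg2 * d) * (μ⁻¹ * ℓf0) := by
        gcongr
        · exact (le_sqrt_sq_add_sq _ _).trans (hgradflip _ _)
        · exact hhesslip _ _
        · exact norm_grady_le hℓf0.le hflip _
    _ = (ℓf0 * ℓg2 / μ ^ 2 + ℓf1 / μ) * d := by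
        field_simp
        ring
    _ ≤ (ℓf0 * ℓg2 / μ ^ 2 + ℓf1 / μ) * (√(1 + (ℓg1 / μ) ^ 2) * ‖x - x'‖) := by
        gcongr
        exact sqrt_sq_add_sq_le (norm_nonneg _) (norm_nonneg _) hy
    _ = _ := by ring

/-- the map v*(x) = (∇²_{yy} g(x,y*(x)))⁻¹ ∇_y f(x,y*(x)) is
Lipschitz with constant √(1+κ²)(ℓ_{f,0}ℓ_{g,2}/μ² + ℓ_{f,1}/μ), κ = ℓ_{g,1}/μ. -/
theorem statement_6 {m n : ℕ}
    (f g : EuclideanSpace ℝ (Fin m) × EuclideanSpace ℝ (Fin n) → ℝ)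
    (μ ℓf0 ℓf1 ℓg1 ℓg2 : ℝ)
    (hμ : 0 < μ) (hℓf0 : 0 < ℓf0) (hℓf1 : 0 < ℓf1) (hℓg1 : 0 < ℓg1) (hℓg2 : 0 < ℓg2)
    (hf : ContDiff ℝ 1 f) (hg : ContDiff ℝ 2 g)
    (ystar : EuclideanSpace ℝ (Fin m) → EuclideanSpace ℝ (Fin n))
    -- μ-strong convexity of y ↦ g(x,y)
    (hsc : ∀ x, ConvexOn ℝ Set.univ (fun y => g (x, y) - μ / 2 * ‖y‖ ^ 2))
    -- y*(x) is the unique minimizer of y ↦ g(x,y)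
    (hmin : ∀ x y, g (x, ystar x) ≤ g (x, y))
    (huniq : ∀ x y, (∀ z, g (x, y) ≤ g (x, z)) → y = ystar x)
    -- f is ℓ_{f,0}-Lipschitz in the joint variable
    (hflip : ∀ p q : EuclideanSpace ℝ (Fin m) × EuclideanSpace ℝ (Fin n),
      |f p - f q| ≤ ℓf0 * Real.sqrt (‖p.1 - q.1‖ ^ 2 + ‖p.2 - q.2‖ ^ 2))
    -- ∇f is ℓ_{f,1}-Lipschitz in the joint variable
    (hgradflip : ∀ p q : EuclideanSpace ℝ (Fin m) × EuclideanSpace ℝ (Fin n),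
      Real.sqrt (‖gradx f p - gradx f q‖ ^ 2 + ‖grady f p - grady f q‖ ^ 2)
        ≤ ℓf1 * Real.sqrt (‖p.1 - q.1‖ ^ 2 + ‖p.2 - q.2‖ ^ 2))
    -- ∇g is ℓ_{g,1}-Lipschitz in the joint variable
    (hglip : ∀ p q : EuclideanSpace ℝ (Fin m) × EuclideanSpace ℝ (Fin n),
      Real.sqrt (‖gradx g p - gradx g q‖ ^ 2 + ‖grady g p - grady g q‖ ^ 2)
        ≤ ℓg1 * Real.sqrt (‖p.1 - q.1‖ ^ 2 + ‖p.2 - q.2‖ ^ 2))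
    -- ∇²_{xy} g and ∇²_{yy} g are ℓ_{g,2}-Lipschitz in operator norm
    (hcrosslip : ∀ p q : EuclideanSpace ℝ (Fin m) × EuclideanSpace ℝ (Fin n),
      ‖crossxy g p - crossxy g q‖
        ≤ ℓg2 * Real.sqrt (‖p.1 - q.1‖ ^ 2 + ‖p.2 - q.2‖ ^ 2))
    (hhesslip : ∀ p q : EuclideanSpace ℝ (Fin m) × EuclideanSpace ℝ (Fin n),
      ‖hessyy g p - hessyy g q‖
        ≤ ℓg2 * Real.sqrt (‖p.1 - q.1‖ ^ 2 + ‖p.2 - q.2‖ ^ 2))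
    (vstar : EuclideanSpace ℝ (Fin m) → EuclideanSpace ℝ (Fin n))
    (hvstar : ∀ x, vstar x = (hessyy g (x, ystar x)).inverse (grady f (x, ystar x))) :
    ∀ x x', ‖vstar x - vstar x'‖ ≤
      Real.sqrt (1 + (ℓg1 / μ) ^ 2) * (ℓf0 * ℓg2 / μ ^ 2 + ℓf1 / μ) * ‖x - x'‖ :=
  statement_6_general f g μ ℓf0 ℓf1 ℓg1 ℓg2 hμ hℓf0 hℓf1 hℓg2 hg ystar hsc hmin hflip hgradflip
    hglip hhesslip vstar hvstar
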